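/- Suppose 0 < b < 1, q > 0, and Ψ(b,q) ≥ 0, where Ψ(b,q) = (4/3)·(b/(1−b))·((b+q+1)/(b+q+2)) − 2ψ(ζ(b,q)) − ψ(ζ(b,q))², ζ(b,q) = (2/9)·b²/((b+1)(b+2))·(b+q+3)(b+q+4)/(b+q+2)², and ψ(ζ) = ζ^{1/3}((1+√(1−ζ))^{1/3} + (1−√(1−ζ))^{1/3}). Then for all w ≥ 0, M(b−1, b+q+1, w)/M(b, b+q+1, w) ≥ −(1−b)/(b+2). -/

import Mathlib

/-- Kummer's confluent hypergeometric function `M(a, c, w)`. -/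
noncomputable def kummerM (a c w : ℝ) : ℝ :=
  ∑' i : ℕ, ((ascPochhammer ℝ i).eval a / (ascPochhammer ℝ i).eval c) * w ^ i / (Nat.factorial i)

/-- The Beta function as an integral. -/
noncomputable def betaFn (x y : ℝ) : ℝ :=
  ∫ t in (0:ℝ)..1, t ^ (x - 1) * (1 - t) ^ (y - 1)

noncomputable def psi (z : ℝ) : ℝ :=
  z ^ ((1:ℝ)/3) * ((1 + Real.sqrt (1 - z)) ^ ((1:ℝ)/3) + (1 - Real.sqrt (1 - z)) ^ ((1:ℝ)/3))

noncomputable def zeta (b q : ℝ) : ℝ :=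
  (2/9) * (b^2 / ((b+1)*(b+2))) * ((b+q+3)*(b+q+4) / (b+q+2)^2)

noncomputable def Psi (b q : ℝ) : ℝ :=
  (4/3) * (b / (1 - b)) * ((b+q+1) / (b+q+2)) - 2 * psi (zeta b q) - (psi (zeta b q))^2

/-!
Since `M(b, c, w) > 0`, the claim is `(b + 2) M(b - 1, c, w) + (1 - b) M(b, c, w) ≥ 0` with
`c = b + q + 1`. The coefficient of `wⁿ` in this series is `3` for `n = 0` and
`(1 - b)(n - 3)(b)ₙ₋₁ / ((c)ₙ n!)` for `n ≥ 1`, so only the terms in `w` and `w²` are negative and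
the series is bounded below by its Taylor polynomial of degree four. Writing `x = b w / (3 (c + 1))`
and `Z = ζ(b, q)`, that polynomial is `3 - κ (Z (8x + 6x²) - x⁴)` with `κ > 0`; the bracket is
maximal at the root `p = ψ(Z)` of `p³ = 3Zp + 2Z`, and `Ψ(b, q) ≥ 0` says exactly that the
polynomial is still nonnegative there.
-/

lemma abs_ascPochhammer_eval_le {a c : ℝ} (hc : 0 < c) (n : ℕ) :
    |(ascPochhammer ℝ n).eval a| ≤ max 1 (|a| / c) ^ n * (ascPochhammer ℝ n).eval c := by
  set K := max 1 (|a| / c)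
  have hK1 : 1 ≤ K := le_max_left _ _
  have haK : |a| ≤ K * c := (div_le_iff₀ hc).mp (le_max_right _ _)
  induction n with
  | zero => simp
  | succ n ih =>
    have hstep : |a + n| ≤ K * (c + n) := by
      have hn : (n : ℝ) ≤ K * n := le_mul_of_one_le_left n.cast_nonneg hK1
      calc |a + n| ≤ |a| + n := by simpa using abs_add_le a n
        _ ≤ K * (c + n) := by linarith
    rw [ascPochhammer_succ_eval, ascPochhammer_succ_eval, abs_mul, pow_succ]
    calc |(ascPochhammer ℝ n).eval a| * |a + n|
        ≤ (K ^ n * (ascPochhammer ℝ n).eval c) * (K * (c + n)) :=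
          mul_le_mul ih hstep (abs_nonneg _) (by positivity [ascPochhammer_pos n c hc])
      _ = K ^ n * K * ((ascPochhammer ℝ n).eval c * (c + n)) := by ring

lemma summable_kummer_series (a w : ℝ) {c : ℝ} (hc : 0 < c) :
    Summable fun i : ℕ =>
      (ascPochhammer ℝ i).eval a / (ascPochhammer ℝ i).eval c * w ^ i / (Nat.factorial i) := by
  refine .of_norm_bounded (Real.summable_pow_div_factorial (max 1 (|a| / c) * |w|)) fun i => ?_
  have hci := ascPochhammer_pos i c hc
  rw [Real.norm_eq_abs, abs_div, abs_mul, abs_div, abs_of_pos hci, Nat.abs_cast, abs_pow, mul_pow]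
  gcongr
  rw [div_le_iff₀ hci]
  exact abs_ascPochhammer_eval_le hc i

lemma kummerM_pos {a c w : ℝ} (ha : 0 < a) (hc : 0 < c) (hw : 0 ≤ w) : 0 < kummerM a c w := by
  refine (summable_kummer_series a w hc).tsum_pos (fun i => ?_) 0 (by simp)
  have := ascPochhammer_pos i a ha
  have := ascPochhammer_pos i c hc
  positivity

lemma add_two_mul_ascPochhammer_succ_eval_sub_one_add (b : ℝ) (n : ℕ) :
    (b + 2) * (ascPochhammer ℝ (n + 1)).eval (b - 1) + (1 - b) * (ascPochhammer ℝ (n + 1)).eval b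
      = (1 - b) * ((n : ℝ) - 2) * (ascPochhammer ℝ n).eval b := by
  rw [ascPochhammer_succ_eval n b, ascPochhammer_succ_left]
  simp only [Polynomial.eval_mul, Polynomial.eval_X, Polynomial.eval_comp, Polynomial.eval_add,
    Polynomial.eval_one, sub_add_cancel]
  ring

/-- The degree-four Taylor polynomial of `(b + 2) M(b - 1, c, w) + (1 - b) M(b, c, w)`. -/
noncomputable def kummerCombQuartic (b c w : ℝ) : ℝ :=
  3 - 2 * (1 - b) * w / c - b * (1 - b) * w ^ 2 / (2 * c * (c + 1))
    + (1 - b) * b * (b + 1) * (b + 2) * w ^ 4 / (24 * c * (c + 1) * (c + 2) * (c + 3))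

lemma kummerCombQuartic_le {b c w : ℝ} (hb0 : 0 < b) (hb1 : b ≤ 1) (hc : 0 < c) (hw : 0 ≤ w) :
    kummerCombQuartic b c w ≤ (b + 2) * kummerM (b - 1) c w + (1 - b) * kummerM b c w := by
  set t : ℕ → ℝ := fun i => ((b + 2) * (ascPochhammer ℝ i).eval (b - 1)
    + (1 - b) * (ascPochhammer ℝ i).eval b) / (ascPochhammer ℝ i).eval c * w ^ i / i.factorial
  have hs1 := (summable_kummer_series (b - 1) w hc).mul_left (b + 2)
  have hs2 := (summable_kummer_series b w hc).mul_left (1 - b)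
  have hcomb : (b + 2) * kummerM (b - 1) c w + (1 - b) * kummerM b c w = ∑' i, t i := by
    rw [kummerM, kummerM, ← tsum_mul_left, ← tsum_mul_left, ← hs1.tsum_add hs2]
    congr 1; ext i; ring
  have ht : Summable t := (hs1.add hs2).congr fun i => by ring
  have hhead : ∑ i ∈ Finset.range 5, t i = kummerCombQuartic b c w := by
    have := hc.ne'
    have : c + 1 ≠ 0 := by positivity
    have : c + 2 ≠ 0 := by positivity
    have : c + 3 ≠ 0 := by positivity
    simp [t, kummerCombQuartic, Finset.sum_range_succ, ascPochhammer_succ_eval, Nat.factorial]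
    field_simp
    ring
  have htail : 0 ≤ ∑' i, t (i + 5) := by
    refine tsum_nonneg fun i => ?_
    have := ascPochhammer_pos (i + 4) b hb0
    have := ascPochhammer_pos (i + 5) c hc
    have hcoef := add_two_mul_ascPochhammer_succ_eval_sub_one_add b (i + 4)
    have h1b : (0 : ℝ) ≤ 1 - b := by linarith
    simp only [t, hcoef]
    rw [Nat.cast_add, show (i : ℝ) + (4 : ℕ) - 2 = i + 2 by push_cast; ring]
    positivity
  rw [hcomb, ← ht.sum_add_tsum_nat_add 5, hhead]
  linarith

lemma rpow_one_div_three_pow_three {x : ℝ} (hx : 0 ≤ x) : (x ^ ((1 : ℝ) / 3)) ^ 3 = x := by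
  simpa using Real.rpow_inv_natCast_pow hx (n := 3) (by norm_num)

lemma psi_nonneg {z : ℝ} (hz : 0 ≤ z) : 0 ≤ psi z := by
  have : Real.sqrt (1 - z) ≤ 1 := Real.sqrt_le_one.mpr (by linarith)
  unfold psi
  have : 0 ≤ 1 - Real.sqrt (1 - z) := by linarith
  positivity

/-- `psi` is Cardano's formula for the root of this cubic. -/
lemma psi_pow_three {z : ℝ} (hz0 : 0 ≤ z) (hz1 : z ≤ 1) : psi z ^ 3 = 3 * z * psi z + 2 * z := by
  set s := Real.sqrt (1 - z)
  have hs0 : 0 ≤ s := Real.sqrt_nonneg _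
  have hs1 : s ≤ 1 := Real.sqrt_le_one.mpr (by linarith)
  have hss : (1 + s) * (1 - s) = z := by
    have : s ^ 2 = 1 - z := Real.sq_sqrt (by linarith)
    linear_combination -this
  have hu := rpow_one_div_three_pow_three (by linarith : 0 ≤ 1 + s)
  have hv := rpow_one_div_three_pow_three (by linarith : 0 ≤ 1 - s)
  have huv : (1 + s) ^ ((1 : ℝ) / 3) * (1 - s) ^ ((1 : ℝ) / 3) = z ^ ((1 : ℝ) / 3) := by
    rw [← Real.mul_rpow (by linarith) (by linarith), hss]
  unfold psi
  rw [← huv]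
  set u := (1 + s) ^ ((1 : ℝ) / 3)
  set v := (1 - s) ^ ((1 : ℝ) / 3)
  linear_combination (u ^ 3 + v ^ 3 + 3 * u * v * (u + v)) * (v ^ 3 * hu + (1 + s) * hv + hss)
    + z * (hu + hv)

lemma zeta_nonneg {b q : ℝ} (hb : 0 ≤ b) (hq : 0 ≤ q) : 0 ≤ zeta b q := by
  unfold zeta
  positivity

lemma zeta_le_one {b q : ℝ} (hb : 0 ≤ b) (hq : 0 ≤ q) : zeta b q ≤ 1 := by
  have h1 : b ^ 2 / ((b + 1) * (b + 2)) ≤ 1 := by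
    rw [div_le_one (by positivity)]
    nlinarith
  have h2 : (b + q + 3) * (b + q + 4) / (b + q + 2) ^ 2 ≤ 3 := by
    rw [div_le_iff₀ (by positivity)]
    nlinarith
  unfold zeta
  have : 0 ≤ (b + q + 3) * (b + q + 4) / (b + q + 2) ^ 2 := by positivity
  nlinarith [mul_le_mul h1 h2 this zero_le_one]

lemma sub_pow_four_le_of_cubic {Z p : ℝ} (hp : 0 ≤ p) (hcubic : p ^ 3 = 3 * Z * p + 2 * Z)
    (x : ℝ) : Z * (8 * x + 6 * x ^ 2) - x ^ 4 ≤ Z * (6 * p + 3 * p ^ 2) := by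
  have hfactor : (3 * p + 2) * (Z * (6 * p + 3 * p ^ 2) - (Z * (8 * x + 6 * x ^ 2) - x ^ 4))
      = (x - p) ^ 2 * ((3 * p + 2) * (x + p) ^ 2 + 4 * p ^ 2) := by
    linear_combination (8 * x + 6 * x ^ 2 - 6 * p - 3 * p ^ 2) * hcubic
  have : 0 ≤ (3 * p + 2) * (Z * (6 * p + 3 * p ^ 2) - (Z * (8 * x + 6 * x ^ 2) - x ^ 4)) := by
    rw [hfactor]
    positivity
  linarith [(mul_nonneg_iff_of_pos_left (by positivity : (0 : ℝ) < 3 * p + 2)).mp this]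

lemma kummerCombQuartic_nonneg {b q p : ℝ} (hb0 : 0 < b) (hb1 : b < 1) (hq : 0 ≤ q) (hp : 0 ≤ p)
    (hcubic : p ^ 3 = 3 * zeta b q * p + 2 * zeta b q)
    (hΨ : 2 * p + p ^ 2 ≤ (4 / 3) * (b / (1 - b)) * ((b + q + 1) / (b + q + 2))) (w : ℝ) :
    0 ≤ kummerCombQuartic b (b + q + 1) w := by
  have hZ : 0 < zeta b q := by unfold zeta; positivity
  have h1b : 0 < 1 - b := by linarith
  set κ := 3 * (1 - b) * (b + q + 2) / (4 * b * (b + q + 1) * zeta b q)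
  set x := b * w / (3 * (b + q + 2))
  have hκ : 0 ≤ κ := by positivity
  have hid : kummerCombQuartic b (b + q + 1) w
      = 3 - κ * (zeta b q * (8 * x + 6 * x ^ 2) - x ^ 4) := by
    simp only [kummerCombQuartic, κ, x, zeta]
    field_simp
    ring
  have hbound : κ * (zeta b q * (6 * p + 3 * p ^ 2)) ≤ 3 := by
    have : κ * (zeta b q * (6 * p + 3 * p ^ 2))
        = 9 * (1 - b) * (b + q + 2) / (4 * b * (b + q + 1)) * (2 * p + p ^ 2) := by
      simp only [κ]
      field_simp
      ring
    rw [this]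
    calc _ ≤ 9 * (1 - b) * (b + q + 2) / (4 * b * (b + q + 1))
          * ((4 / 3) * (b / (1 - b)) * ((b + q + 1) / (b + q + 2))) := by gcongr
      _ = 3 := by field_simp; ring
  rw [hid]
  linarith [mul_le_mul_of_nonneg_left (sub_pow_four_le_of_cubic hp hcubic x) hκ]

theorem ratio_lower_bound (b q : ℝ) (hb0 : 0 < b) (hb1 : b < 1) (hq : 0 < q)
    (hΨ : 0 ≤ Psi b q) :
    ∀ w : ℝ, 0 ≤ w →
      kummerM (b - 1) (b + q + 1) w / kummerM b (b + q + 1) w ≥ -(1 - b) / (b + 2) := by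
  intro w hw
  have hz0 := zeta_nonneg hb0.le hq.le
  have hΨ' : 2 * psi (zeta b q) + psi (zeta b q) ^ 2
      ≤ (4 / 3) * (b / (1 - b)) * ((b + q + 1) / (b + q + 2)) := by
    unfold Psi at hΨ
    linarith
  have hquartic := kummerCombQuartic_nonneg hb0 hb1 hq.le (psi_nonneg hz0)
    (psi_pow_three hz0 (zeta_le_one hb0.le hq.le)) hΨ' w
  have hc : 0 < b + q + 1 := by linarith
  have hcomb := kummerCombQuartic_le hb0 hb1.le hc hw
  rw [ge_iff_le, div_le_div_iff₀ (by linarith) (kummerM_pos hb0 hc hw)]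
  linarith
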